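/- arXiv:2605.24804 — 2 statements merged into one kernel-verified Lean document; each statement's English description precedes it below -/
import Mathlib

section
/- Let N ≥ 1, a > -N, and R ≥ 0. Then for every u ∈ C_c^1(ℝ^N), ∫_{|x|≥R} |u(x)|² |x|^a dx ≤ (4/(a+N)²) ∫_{|x|≥R} |x·∇u(x)|² |x|^a dx. -/
/-!
In polar coordinates `x = r • ω` the weight `‖x‖ ^ a` together with the Jacobian `r ^ (N - 1)`
becomes `r ^ (p - 1)` with `p = a + N > 0`, and `⟪x, ∇u x⟫ = r g'(r)` for `g(r) = u (r • ω)`.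
So it suffices to prove, on every ray, the one-dimensional Hardy inequality
`∫_R^∞ g² r^(p-1) ≤ 4/p² ∫_R^∞ g'² r^(p+1)`. Integrating `(g² r^p)'` over `(R, ∞)` gives
`p ∫ g² r^(p-1) = -g(R)² R^p - 2 ∫ g g' r^p ≤ -2 ∫ g g' r^p`, and AM-GM in the form
`-2 g g' r^p ≤ (p/2) g² r^(p-1) + (2/p) g'² r^(p+1)` absorbs half of the left-hand side.
-/

open MeasureTheory Real Set Filter Topology Metric Module
open scoped RealInnerProductSpace ENNReal

theorem HasCompactSupport.fun_pow {α M : Type*} [TopologicalSpace α] [MonoidWithZero M]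
    {f : α → M} (hf : HasCompactSupport f) {n : ℕ} (hn : n ≠ 0) :
    HasCompactSupport fun x => f x ^ n :=
  hf.comp_left (zero_pow hn)

theorem integrable_mul_norm_rpow {E : Type*} [NormedAddCommGroup E] [NormedSpace ℝ E]
    [FiniteDimensional ℝ E] [MeasurableSpace E] [BorelSpace E] [Nontrivial E] {μ : Measure E}
    [μ.IsAddHaarMeasure] {a : ℝ} (ha : -(finrank ℝ E : ℝ) < a) {φ : E → ℝ}
    (hφ : Continuous φ) (hφs : HasCompactSupport φ) :
    Integrable (fun x => φ x * ‖x‖ ^ a) μ := by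
  have hloc : LocallyIntegrable (fun x : E => ‖x‖ ^ a) μ :=
    locallyIntegrable_of_norm_le_rpow (C := 1) (α := -a) finrank_pos (by linarith)
      (ae_of_all _ fun x => by simp [abs_of_nonneg (rpow_nonneg (norm_nonneg x) a)])
      (continuous_norm.measurable.pow_const a).aestronglyMeasurable
  exact hloc.integrable_smul_left_of_hasCompactSupport hφ hφs

theorem integrableOn_Ioi_mul_rpow {b R : ℝ} (hb : -1 < b) (hR : 0 ≤ R) {h : ℝ → ℝ}
    (hc : Continuous h) (hs : HasCompactSupport h) :
    IntegrableOn (fun r => h r * r ^ b) (Ioi R) := by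
  refine ((integrable_mul_norm_rpow (μ := volume) (by simpa using hb) hc hs).integrableOn).congr_fun
    (fun r hr => ?_) measurableSet_Ioi
  simp only [norm_of_nonneg (hR.trans hr.out.le : 0 ≤ r)]

theorem integrableOn_Ioi_sq_mul_rpow {b R : ℝ} (hb : -1 < b) (hR : 0 ≤ R) {h : ℝ → ℝ}
    (hc : Continuous h) (hs : HasCompactSupport h) :
    IntegrableOn (fun r => h r ^ 2 * r ^ b) (Ioi R) :=
  integrableOn_Ioi_mul_rpow (h := fun r => h r ^ 2) hb hR (hc.pow 2) (hs.fun_pow two_ne_zero)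

theorem neg_two_mul_mul_rpow_le {p r : ℝ} (hp : 0 < p) (hr : 0 < r) (x y : ℝ) :
    -(2 * (x * y * r ^ p)) ≤ p / 2 * (x ^ 2 * r ^ (p - 1)) + 2 / p * (y ^ 2 * r ^ (p + 1)) := by
  have h₁ : r ^ p = r ^ (p - 1) * r := by rw [← rpow_add_one hr.ne']; ring_nf
  have h₂ : r ^ (p + 1) = r ^ (p - 1) * r ^ 2 := by
    rw [← rpow_add_natCast hr.ne']; ring_nf
  have hsq : 0 ≤ 2 / p * r ^ (p - 1) * (p / 2 * x + r * y) ^ 2 := by positivity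
  have : 2 / p * r ^ (p - 1) * (p / 2 * x + r * y) ^ 2
      = p / 2 * (x ^ 2 * r ^ (p - 1)) + 2 / p * (y ^ 2 * r ^ (p + 1)) + 2 * (x * y * r ^ p) := by
    rw [h₁, h₂]; field_simp; ring
  linarith

section Hardy1D

variable {p R : ℝ} {g : ℝ → ℝ}

theorem mul_integral_sq_mul_rpow_le (hp : 0 < p) (hR : 0 ≤ R) (hg : ContDiff ℝ 1 g)
    (hs : HasCompactSupport g) :
    p * ∫ r in Ioi R, g r ^ 2 * r ^ (p - 1) ≤ -(2 * ∫ r in Ioi R, g r * deriv g r * r ^ p) := by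
  set F : ℝ → ℝ := fun r => g r ^ 2 * r ^ p
  have hFc : Continuous F := (hg.continuous.pow 2).mul (continuous_rpow_const hp.le)
  have hFs : HasCompactSupport F := (hs.fun_pow two_ne_zero).mul_right
  have hF' : ∀ r ∈ Ioi R, HasDerivAt F
      (2 * (g r * deriv g r * r ^ p) + p * (g r ^ 2 * r ^ (p - 1))) r := by
    intro r hr
    have hg' := (hg.differentiable one_ne_zero r).hasDerivAt
    refine ((hg'.fun_pow 2).fun_mul
      (hasDerivAt_rpow_const (p := p) (Or.inl (hR.trans_lt hr).ne'))).congr_deriv ?_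
    norm_num
    ring
  have hI₁ := integrableOn_Ioi_mul_rpow (h := fun r => g r * deriv g r) (b := p) (by linarith)
    hR (hg.continuous.mul (hg.continuous_deriv le_rfl)) hs.mul_right
  have hI₂ := integrableOn_Ioi_sq_mul_rpow (b := p - 1) (by linarith) hR hg.continuous hs
  have hFTC := integral_Ioi_of_hasDerivAt_of_tendsto hFc.continuousWithinAt hF'
    ((hI₁.const_mul 2).add (hI₂.const_mul p)) (hFs.is_zero_at_infty.mono_left atTop_le_cocompact)
  rw [integral_add (hI₁.const_mul 2) (hI₂.const_mul p), integral_const_mul,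
    integral_const_mul] at hFTC
  have : 0 ≤ F R := by positivity
  linarith

theorem integral_sq_mul_rpow_le (hp : 0 < p) (hR : 0 ≤ R) (hg : ContDiff ℝ 1 g)
    (hs : HasCompactSupport g) :
    ∫ r in Ioi R, g r ^ 2 * r ^ (p - 1) ≤
      4 / p ^ 2 * ∫ r in Ioi R, deriv g r ^ 2 * r ^ (p + 1) := by
  have hg' := hg.continuous_deriv le_rfl
  have hA := integrableOn_Ioi_sq_mul_rpow (b := p - 1) (by linarith) hR hg.continuous hs
  have hB := integrableOn_Ioi_sq_mul_rpow (b := p + 1) (by linarith) hR hg' hs.deriv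
  have hD := integrableOn_Ioi_mul_rpow (h := fun r => g r * deriv g r) (b := p) (by linarith) hR
    (hg.continuous.mul hg') hs.mul_right
  have hAMGM : -(2 * ∫ r in Ioi R, g r * deriv g r * r ^ p) ≤
      p / 2 * (∫ r in Ioi R, g r ^ 2 * r ^ (p - 1)) +
        2 / p * ∫ r in Ioi R, deriv g r ^ 2 * r ^ (p + 1) := by
    rw [← integral_const_mul, ← integral_neg, ← integral_const_mul, ← integral_const_mul,
      ← integral_add (hA.const_mul _) (hB.const_mul _)]
    exact setIntegral_mono_on (hD.const_mul 2).neg ((hA.const_mul _).add (hB.const_mul _))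
      measurableSet_Ioi fun r hr => neg_two_mul_mul_rpow_le hp (hR.trans_lt hr) _ _
  have hIBP := mul_integral_sq_mul_rpow_le hp hR hg hs
  set A := ∫ r in Ioi R, g r ^ 2 * r ^ (p - 1)
  set B := ∫ r in Ioi R, deriv g r ^ 2 * r ^ (p + 1)
  have hAB : p / 2 * A ≤ 2 / p * B := by linarith
  calc A = 2 / p * (p / 2 * A) := by field_simp
    _ ≤ 2 / p * (2 / p * B) := by gcongr
    _ = 4 / p ^ 2 * B := by ring

theorem lintegral_sq_mul_rpow_le (hp : 0 < p) (hR : 0 ≤ R) (hg : ContDiff ℝ 1 g)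
    (hs : HasCompactSupport g) :
    ∫⁻ r in Ioi R, ENNReal.ofReal (g r ^ 2 * r ^ (p - 1)) ≤
      ENNReal.ofReal (4 / p ^ 2) * ∫⁻ r in Ioi R, ENNReal.ofReal (deriv g r ^ 2 * r ^ (p + 1)) := by
  have hnonneg : ∀ {b : ℝ} {h : ℝ → ℝ}, 0 ≤ᵐ[volume.restrict (Ioi R)] fun r => h r ^ 2 * r ^ b :=
    fun {b h} => (ae_restrict_mem measurableSet_Ioi).mono fun r (hr : R < r) =>
      mul_nonneg (sq_nonneg _) (rpow_nonneg (hR.trans hr.le) b)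
  have hA := integrableOn_Ioi_sq_mul_rpow (b := p - 1) (by linarith) hR hg.continuous hs
  have hB := integrableOn_Ioi_sq_mul_rpow (b := p + 1) (by linarith) hR
    (hg.continuous_deriv le_rfl) hs.deriv
  rw [← ofReal_integral_eq_lintegral_ofReal hA hnonneg,
    ← ofReal_integral_eq_lintegral_ofReal hB hnonneg, ← ENNReal.ofReal_mul (by positivity)]
  exact ENNReal.ofReal_le_ofReal (integral_sq_mul_rpow_le hp hR hg hs)

end Hardy1D

section Polar

variable {E : Type*} [NormedAddCommGroup E] [NormedSpace ℝ E] [FiniteDimensional ℝ E]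
  [MeasurableSpace E] [BorelSpace E] [Nontrivial E] (μ : Measure E) [μ.IsAddHaarMeasure]

theorem lintegral_eq_lintegral_sphere_Ioi {f : E → ℝ≥0∞} (hf : Measurable f) :
    ∫⁻ x, f x ∂μ = ∫⁻ ω : sphere (0 : E) 1, ∫⁻ r in Ioi (0 : ℝ),
      ENNReal.ofReal (r ^ (finrank ℝ E - 1)) * f (r • (ω : E)) ∂volume ∂μ.toSphere := by
  set F : sphere (0 : E) 1 × Ioi (0 : ℝ) → ℝ≥0∞ := fun q => f (q.2.1 • (q.1 : E))
  have hF : Measurable F := hf.comp (by fun_prop)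
  have hFT : ∀ x : ({0}ᶜ : Set E), F (homeomorphUnitSphereProd E x) = f x := fun x => by
    simp [F, smul_smul, mul_inv_cancel₀ (norm_ne_zero_iff.2 x.2)]
  calc ∫⁻ x, f x ∂μ = ∫⁻ x : ({0}ᶜ : Set E), F (homeomorphUnitSphereProd E x) ∂μ.comap (↑) := by
        rw [lintegral_congr hFT, lintegral_subtype_comap (measurableSet_singleton 0).compl,
          restrict_compl_singleton]
    _ = ∫⁻ q, F q ∂μ.toSphere.prod (.volumeIoiPow (finrank ℝ E - 1)) :=
        μ.measurePreserving_homeomorphUnitSphereProd.lintegral_comp hF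
    _ = _ := by
        rw [lintegral_prod _ hF.aemeasurable]
        refine lintegral_congr fun ω => ?_
        rw [Measure.volumeIoiPow,
          lintegral_withDensity_eq_lintegral_mul _ (by fun_prop) (by fun_prop),
          ← lintegral_subtype_comap measurableSet_Ioi]
        rfl

theorem setLIntegral_le_norm_eq_lintegral_sphere_Ioi {f : E → ℝ≥0∞} (hf : Measurable f) {R : ℝ}
    (hR : 0 ≤ R) :
    ∫⁻ x in {x | R ≤ ‖x‖}, f x ∂μ = ∫⁻ ω : sphere (0 : E) 1, ∫⁻ r in Ioi R,
      ENNReal.ofReal (r ^ (finrank ℝ E - 1)) * f (r • (ω : E)) ∂volume ∂μ.toSphere := by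
  have hS : MeasurableSet {x : E | R ≤ ‖x‖} := measurableSet_le measurable_const measurable_norm
  rw [← lintegral_indicator hS, lintegral_eq_lintegral_sphere_Ioi μ (hf.indicator hS)]
  refine lintegral_congr fun ω => ?_
  have hIoi : (Ioi R : Set ℝ) =ᵐ[volume] (Ici R ∩ Ioi 0 : Set ℝ) := by
    simpa [Ioi_inter_Ioi, hR] using (Ioi_ae_eq_Ici (a := R)).inter (ae_eq_refl (Ioi (0 : ℝ)))
  rw [Measure.restrict_congr_set hIoi, ← Measure.restrict_restrict measurableSet_Ici,
    ← lintegral_indicator measurableSet_Ici]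
  refine setLIntegral_congr_fun measurableSet_Ioi fun r (hr : 0 < r) => ?_
  have : ‖r • (ω : E)‖ = r := by simp [norm_smul, abs_of_pos hr]
  by_cases h : R ≤ r <;> simp [indicator, this, h]

end Polar

theorem pow_pred_mul_norm_smul_rpow {E : Type*} [NormedAddCommGroup E] [NormedSpace ℝ E]
    {ω : E} (hω : ‖ω‖ = 1) {r : ℝ} (hr : 0 < r) {n : ℕ} (hn : 1 ≤ n) (a c : ℝ) :
    r ^ (n - 1) * (c * ‖r • ω‖ ^ a) = c * r ^ (a + n - 1) := by
  rw [norm_smul, hω, mul_one, norm_of_nonneg hr.le,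
    show a + n - 1 = a + ((n - 1 : ℕ) : ℝ) by push_cast [Nat.cast_sub hn]; ring,
    rpow_add_natCast hr.ne']
  ring

section Radial

variable {E : Type*} [NormedAddCommGroup E] [InnerProductSpace ℝ E] [CompleteSpace E]

theorem inner_smul_gradient_eq_mul_deriv {u : E → ℝ} {ω : E} {r : ℝ}
    (hu : DifferentiableAt ℝ u (r • ω)) :
    ⟪r • ω, gradient u (r • ω)⟫ = r * deriv (fun t : ℝ => u (t • ω)) r := by
  have h : HasDerivAt (fun t : ℝ => u (t • ω)) (fderiv ℝ u (r • ω) ω) r := by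
    have := hu.hasFDerivAt.comp_hasDerivAt r ((hasDerivAt_id r).smul_const ω)
    rwa [one_smul] at this
  rw [h.deriv, real_inner_smul_left, inner_gradient_right]
  simp

theorem ContDiff.continuous_inner_self_gradient {u : E → ℝ} (hu : ContDiff ℝ 1 u) :
    Continuous fun x => ⟪x, gradient u x⟫ := by
  simp_rw [inner_gradient_right, conj_trivial]
  exact (hu.continuous_fderiv one_ne_zero).clm_apply continuous_id

theorem HasCompactSupport.inner_self_gradient {u : E → ℝ} (hs : HasCompactSupport u) :
    HasCompactSupport fun x => ⟪x, gradient u x⟫ :=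
  (hs.fderiv (𝕜 := ℝ)).mono fun x hx h0 => hx (by simp [inner_gradient_right, h0])

theorem lintegral_sq_along_ray_le {u : E → ℝ} (hu : ContDiff ℝ 1 u) (hsupp : HasCompactSupport u)
    {ω : E} (hω : ‖ω‖ = 1) {n : ℕ} (hn : 1 ≤ n) {a R : ℝ} (ha : -(n : ℝ) < a) (hR : 0 ≤ R) :
    ∫⁻ r in Ioi R, ENNReal.ofReal (r ^ (n - 1)) * ENNReal.ofReal (u (r • ω) ^ 2 * ‖r • ω‖ ^ a) ≤
      ENNReal.ofReal (4 / (a + n) ^ 2) * ∫⁻ r in Ioi R, ENNReal.ofReal (r ^ (n - 1)) *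
        ENNReal.ofReal (⟪r • ω, gradient u (r • ω)⟫ ^ 2 * ‖r • ω‖ ^ a) := by
  have hG : ContDiff ℝ 1 fun t : ℝ => u (t • ω) := hu.comp (contDiff_id.smul contDiff_const)
  have hGs : HasCompactSupport fun t : ℝ => u (t • ω) :=
    hsupp.comp_isClosedEmbedding (isClosedEmbedding_smul_left (norm_pos_iff.1 (hω ▸ one_pos)))
  calc _ = ∫⁻ r in Ioi R, ENNReal.ofReal (u (r • ω) ^ 2 * r ^ (a + n - 1)) := by
        refine setLIntegral_congr_fun measurableSet_Ioi fun r (hr : R < r) => ?_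
        rw [← ENNReal.ofReal_mul (pow_nonneg (hR.trans hr.le) _),
          pow_pred_mul_norm_smul_rpow hω (hR.trans_lt hr) hn]
    _ ≤ _ := lintegral_sq_mul_rpow_le (by linarith) hR hG hGs
    _ = _ := by
        congr 1
        refine setLIntegral_congr_fun measurableSet_Ioi fun r (hr : R < r) => ?_
        have hr₀ : 0 < r := hR.trans_lt hr
        rw [← ENNReal.ofReal_mul (pow_nonneg hr₀.le _),
          inner_smul_gradient_eq_mul_deriv ((hu.differentiable one_ne_zero) _),
          pow_pred_mul_norm_smul_rpow hω hr₀ hn,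
          show a + n + 1 = a + n - 1 + (2 : ℕ) by push_cast; ring, rpow_add_natCast hr₀.ne']
        ring_nf

end Radial

theorem setIntegral_sq_mul_norm_rpow_le {E : Type*} [NormedAddCommGroup E]
    [InnerProductSpace ℝ E] [FiniteDimensional ℝ E] [MeasurableSpace E] [BorelSpace E]
    [Nontrivial E] (μ : Measure E) [μ.IsAddHaarMeasure] {a R : ℝ}
    (ha : -(finrank ℝ E : ℝ) < a) (hR : 0 ≤ R) {u : E → ℝ} (hu : ContDiff ℝ 1 u)
    (hsupp : HasCompactSupport u) :
    ∫ x in {x | R ≤ ‖x‖}, u x ^ 2 * ‖x‖ ^ a ∂μ ≤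
      4 / (a + finrank ℝ E) ^ 2 * ∫ x in {x | R ≤ ‖x‖}, ⟪x, gradient u x⟫ ^ 2 * ‖x‖ ^ a ∂μ := by
  have hnonneg : ∀ {φ : E → ℝ}, 0 ≤ᵐ[μ.restrict {x | R ≤ ‖x‖}] fun x => φ x ^ 2 * ‖x‖ ^ a :=
    ae_of_all _ fun x => by positivity
  have hmeas : ∀ {φ : E → ℝ}, Continuous φ →
      Measurable fun x => ENNReal.ofReal (φ x ^ 2 * ‖x‖ ^ a) :=
    fun hφ => ((hφ.pow 2).measurable.mul (measurable_norm.pow_const a)).ennreal_ofReal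
  have hL : Integrable (fun x => u x ^ 2 * ‖x‖ ^ a) μ :=
    integrable_mul_norm_rpow ha (hu.continuous.pow 2) (hsupp.fun_pow two_ne_zero)
  have hD : Integrable (fun x => ⟪x, gradient u x⟫ ^ 2 * ‖x‖ ^ a) μ :=
    integrable_mul_norm_rpow ha (hu.continuous_inner_self_gradient.pow 2)
      (hsupp.inner_self_gradient.fun_pow two_ne_zero)
  have hrhs : 0 ≤ 4 / (a + finrank ℝ E) ^ 2 *
      ∫ x in {x | R ≤ ‖x‖}, ⟪x, gradient u x⟫ ^ 2 * ‖x‖ ^ a ∂μ :=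
    mul_nonneg (by positivity) (integral_nonneg_of_ae hnonneg)
  rw [← ENNReal.ofReal_le_ofReal_iff hrhs, ENNReal.ofReal_mul (by positivity),
    ofReal_integral_eq_lintegral_ofReal hL.integrableOn hnonneg,
    ofReal_integral_eq_lintegral_ofReal hD.integrableOn hnonneg,
    setLIntegral_le_norm_eq_lintegral_sphere_Ioi μ (hmeas hu.continuous) hR,
    setLIntegral_le_norm_eq_lintegral_sphere_Ioi μ (hmeas hu.continuous_inner_self_gradient) hR,
    ← lintegral_const_mul' _ _ ENNReal.ofReal_ne_top]
  exact lintegral_mono fun ω =>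
    lintegral_sq_along_ray_le hu hsupp (norm_eq_of_mem_sphere ω) finrank_pos ha hR

theorem hardy_inequality_annulus
    (N : ℕ) (hN : 1 ≤ N) (a : ℝ) (ha : -(N : ℝ) < a) (R : ℝ) (hR : 0 ≤ R)
    (u : EuclideanSpace ℝ (Fin N) → ℝ)
    (hu : ContDiff ℝ 1 u) (hsupp : HasCompactSupport u) :
    ∫ x in {x : EuclideanSpace ℝ (Fin N) | R ≤ ‖x‖}, u x ^ 2 * ‖x‖ ^ a
      ≤ (4 / (a + N) ^ 2) *
        ∫ x in {x : EuclideanSpace ℝ (Fin N) | R ≤ ‖x‖},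
          ⟪x, gradient u x⟫ ^ 2 * ‖x‖ ^ a := by
  have : Nontrivial (EuclideanSpace ℝ (Fin N)) :=
    Module.nontrivial_of_finrank_pos (R := ℝ) (by rw [finrank_euclideanSpace_fin]; omega)
  simpa using setIntegral_sq_mul_norm_rpow_le volume (by simpa using ha) hR hu hsupp
end

section
/- Let 0 ≤ s < 2 and R > 0, and let ω₅ be the surface area of the unit sphere S⁵ ⊂ ℝ⁶. Then as ε → 0⁺, ∫_{|y|≤R, y∈ℝ⁶} |y|² / (ε + |y|^{2−s})^{8/(2−s)} dy = (ω₅/(2−s)) |log ε| + O(1). -/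
/-!
In polar coordinates the integral is `ω₅ ∫₀^R r⁷ / (ε + r^a)^b dr` with `a = 2 - s`, `a b = 8`.
Writing `w = r^a / (ε + r^a)`, the integrand is `h(r) w^(b-1)` with
`h(r) = r^(a-1) / (ε + r^a) = (log (ε + r^a) / a)'`, whose integral is
`(log (ε + R^a) - log ε) / a`. Bernoulli's inequality gives
`0 ≤ h - h w^(b-1) ≤ (b - 1) h (1 - w) = (b - 1) w' / a`, so the two integrals differ by at most
`(b - 1) / a`, while `log (ε + R^a)` stays bounded as `ε → 0`.
-/

open MeasureTheory Real Set

/-- The surface area of the unit sphere `S⁵ ⊂ ℝ⁶`, namely `π³`. -/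
noncomputable def omega5 : ℝ := Real.pi ^ 3

section Radial

variable {E F : Type*} [NormedAddCommGroup E] [NormedSpace ℝ E] [FiniteDimensional ℝ E]
  [MeasurableSpace E] [BorelSpace E] [Nontrivial E] (μ : Measure E) [μ.IsAddHaarMeasure]
  [NormedAddCommGroup F] [NormedSpace ℝ F]

open Module in
theorem integral_closedBall_fun_norm_addHaar (f : ℝ → F) {R : ℝ} (hR : 0 ≤ R) :
    ∫ x in Metric.closedBall (0 : E) R, f ‖x‖ ∂μ =
      finrank ℝ E • μ.real (Metric.ball 0 1) • ∫ r in 0..R, r ^ (finrank ℝ E - 1) • f r := by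
  have hind : (Metric.closedBall (0 : E) R).indicator (fun x => f ‖x‖) =
      fun x => (Iic R).indicator f ‖x‖ := by
    ext x
    by_cases h : ‖x‖ ≤ R <;> simp [h]
  rw [← integral_indicator Metric.isClosed_closedBall.measurableSet, hind,
    integral_fun_norm_addHaar μ, intervalIntegral.integral_of_le hR, ← Ioi_inter_Iic,
    ← setIntegral_indicator measurableSet_Iic]
  congr 3 with r
  by_cases h : r ≤ R <;> simp [h]

end Radial

theorem volume_real_ball_fin_six :
    volume.real (Metric.ball (0 : EuclideanSpace ℝ (Fin 6)) 1) = π ^ 3 / 6 := by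
  have hsqrt : √π ^ 6 = π ^ 3 := by
    rw [show 6 = 2 * 3 from rfl, pow_mul, sq_sqrt pi_nonneg]
  have hGamma : Gamma ((6 : ℕ) / 2 + 1) = 6 := by
    rw [show ((6 : ℕ) : ℝ) / 2 + 1 = (3 : ℕ) + 1 by norm_num, Gamma_nat_eq_factorial]
    norm_num [Nat.factorial]
  rw [measureReal_def, EuclideanSpace.volume_ball, Fintype.card_fin, hsqrt, hGamma]
  simp [ENNReal.toReal_ofReal (by positivity : (0 : ℝ) ≤ π ^ 3 / 6)]

theorem integral_norm_le_fin_six (f : ℝ → ℝ) {R : ℝ} (hR : 0 ≤ R) :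
    ∫ y in {y : EuclideanSpace ℝ (Fin 6) | ‖y‖ ≤ R}, f ‖y‖ =
      omega5 * ∫ r in 0..R, r ^ 5 * f r := by
  rw [show {y : EuclideanSpace ℝ (Fin 6) | ‖y‖ ≤ R} = Metric.closedBall 0 R from
      Set.ext fun _ => mem_closedBall_zero_iff.symm,
    integral_closedBall_fun_norm_addHaar volume f hR, finrank_euclideanSpace_fin,
    volume_real_ball_fin_six, omega5]
  simp only [nsmul_eq_mul, smul_eq_mul]
  norm_num
  ring

theorem integral_norm_sq_div_fin_six {a ε R : ℝ} (ha : a ≠ 0) (hR : 0 ≤ R) :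
    ∫ y in {y : EuclideanSpace ℝ (Fin 6) | ‖y‖ ≤ R}, ‖y‖ ^ 2 / (ε + ‖y‖ ^ a) ^ (8 / a) =
      omega5 * ∫ r in 0..R, r ^ (a * (8 / a) - 1) / (ε + r ^ a) ^ (8 / a) := by
  rw [integral_norm_le_fin_six (fun r => r ^ 2 / (ε + r ^ a) ^ (8 / a)) hR,
    mul_div_cancel₀ _ ha]
  congr 2 with r
  rw [show (8 : ℝ) - 1 = (7 : ℕ) by norm_num, rpow_natCast]
  ring

theorem one_sub_rpow_le_mul_one_sub {w c : ℝ} (hw : 0 ≤ w) (hc : 1 ≤ c) :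
    1 - w ^ c ≤ c * (1 - w) := by
  have := one_add_mul_self_le_rpow_one_add (s := w - 1) (by linarith) hc
  rw [add_sub_cancel] at this
  linarith

section Asymptotics

variable {a b ε x R : ℝ}

theorem continuous_const_add_rpow (ε : ℝ) (ha : 0 < a) :
    Continuous (fun r : ℝ => ε + r ^ a) :=
  continuous_const.add (continuous_rpow_const ha.le)

theorem hasDerivAt_const_add_rpow (ε : ℝ) (hx : 0 < x) :
    HasDerivAt (fun r : ℝ => ε + r ^ a) (a * x ^ (a - 1)) x :=
  (hasDerivAt_rpow_const (Or.inl hx.ne')).const_add ε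

theorem rpow_mul_sub_one_div_const_add_rpow (hε : 0 < ε) (hx : 0 < x) :
    x ^ (a * b - 1) / (ε + x ^ a) ^ b =
      x ^ (a - 1) / (ε + x ^ a) * (x ^ a / (ε + x ^ a)) ^ (b - 1) := by
  have hv : 0 < ε + x ^ a := by positivity
  rw [div_rpow (by positivity) hv.le, ← rpow_mul hx.le, div_mul_div_comm, ← rpow_add hx,
    rpow_sub_one hv.ne' b, mul_div_cancel₀ _ hv.ne']
  ring_nf

theorem rpow_sub_one_div_const_add_rpow_sub_le (hb : 2 ≤ b) (hε : 0 < ε) (hx : 0 < x) :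
    0 ≤ x ^ (a - 1) / (ε + x ^ a) - x ^ (a * b - 1) / (ε + x ^ a) ^ b ∧
      x ^ (a - 1) / (ε + x ^ a) - x ^ (a * b - 1) / (ε + x ^ a) ^ b ≤
        (b - 1) * (ε * x ^ (a - 1) / (ε + x ^ a) ^ 2) := by
  have hv : 0 < ε + x ^ a := by positivity
  set w := x ^ a / (ε + x ^ a)
  have hw0 : 0 ≤ w := by positivity
  have hw1 : w ≤ 1 := div_le_one_of_le₀ (by linarith) hv.le
  have h1w : 1 - w = ε / (ε + x ^ a) := by simp only [w]; field_simp; ring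
  rw [rpow_mul_sub_one_div_const_add_rpow hε hx, ← mul_one_sub]
  constructor
  · have : w ^ (b - 1) ≤ 1 := rpow_le_one hw0 hw1 (by linarith)
    have : 0 ≤ x ^ (a - 1) / (ε + x ^ a) := by positivity
    nlinarith
  · calc x ^ (a - 1) / (ε + x ^ a) * (1 - w ^ (b - 1))
        ≤ x ^ (a - 1) / (ε + x ^ a) * ((b - 1) * (1 - w)) := by
          gcongr
          exact one_sub_rpow_le_mul_one_sub hw0 (by linarith)
      _ = (b - 1) * (ε * x ^ (a - 1) / (ε + x ^ a) ^ 2) := by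
          rw [h1w]
          field_simp

theorem continuousOn_log_const_add_rpow_div (ha : 0 < a) (hε : 0 < ε) :
    ContinuousOn (fun r : ℝ => log (ε + r ^ a) / a) (Ici 0) := fun r hr =>
  (((continuous_const_add_rpow ε ha).continuousAt.log
    (by have : (0 : ℝ) ≤ r := hr; positivity)).div_const a).continuousWithinAt

theorem hasDerivAt_log_const_add_rpow_div (ha : a ≠ 0) (hε : 0 < ε) (hx : 0 < x) :
    HasDerivAt (fun r : ℝ => log (ε + r ^ a) / a) (x ^ (a - 1) / (ε + x ^ a)) x := by
  refine (((hasDerivAt_const_add_rpow ε hx).log (by positivity)).div_const a).congr_deriv ?_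
  field_simp

theorem intervalIntegrable_rpow_sub_one_div_const_add_rpow (ha : 0 < a) (hε : 0 < ε)
    (hR : 0 ≤ R) : IntervalIntegrable (fun r => r ^ (a - 1) / (ε + r ^ a)) volume 0 R :=
  (intervalIntegrable_iff_integrableOn_Ioc_of_le hR).2 <|
    intervalIntegral.integrableOn_deriv_of_nonneg
      ((continuousOn_log_const_add_rpow_div ha hε).mono Icc_subset_Ici_self)
      (fun _ hx => hasDerivAt_log_const_add_rpow_div ha.ne' hε hx.1)
      (fun x hx => by have := hx.1; positivity)

theorem integral_rpow_sub_one_div_const_add_rpow (ha : 0 < a) (hε : 0 < ε) (hR : 0 ≤ R) :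
    ∫ r in 0..R, r ^ (a - 1) / (ε + r ^ a) = (log (ε + R ^ a) - log ε) / a := by
  rw [intervalIntegral.integral_eq_sub_of_hasDerivAt_of_le hR
    ((continuousOn_log_const_add_rpow_div ha hε).mono Icc_subset_Ici_self)
    (fun _ hx => hasDerivAt_log_const_add_rpow_div ha.ne' hε hx.1)
    (intervalIntegrable_rpow_sub_one_div_const_add_rpow ha hε hR)]
  simp [zero_rpow ha.ne', sub_div]

theorem continuousOn_rpow_div_const_add_rpow (ha : 0 < a) (hε : 0 < ε) :
    ContinuousOn (fun r : ℝ => r ^ a / (ε + r ^ a)) (Ici 0) := fun r hr =>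
  ((continuous_rpow_const ha.le).continuousAt.div (continuous_const_add_rpow ε ha).continuousAt
    (by have : (0 : ℝ) ≤ r := hr; positivity)).continuousWithinAt

theorem hasDerivAt_rpow_div_const_add_rpow (hε : 0 < ε) (hx : 0 < x) :
    HasDerivAt (fun r : ℝ => r ^ a / (ε + r ^ a))
      (a * (ε * x ^ (a - 1) / (ε + x ^ a) ^ 2)) x := by
  refine ((hasDerivAt_rpow_const (p := a) (Or.inl hx.ne')).div
    (hasDerivAt_const_add_rpow ε hx) (by positivity)).congr_deriv ?_
  field_simp
  ring

theorem abs_integral_rpow_div_const_add_rpow_sub_log_le (ha : 0 < a) (hb : 2 ≤ b)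
    (hε : 0 < ε) (hR : 0 ≤ R) :
    |(∫ r in 0..R, r ^ (a * b - 1) / (ε + r ^ a) ^ b) - (log (ε + R ^ a) - log ε) / a| ≤
      (b - 1) / a := by
  have hbound := fun {x : ℝ} (hx : 0 < x) =>
    rpow_sub_one_div_const_add_rpow_sub_le (a := a) hb hε hx
  have hh := intervalIntegrable_rpow_sub_one_div_const_add_rpow ha hε hR
  have hf : IntervalIntegrable (fun r => r ^ (a * b - 1) / (ε + r ^ a) ^ b) volume 0 R := by
    refine hh.mono_fun (Measurable.aestronglyMeasurable (by fun_prop)) ?_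
    rw [uIoc_of_le hR]
    refine (ae_restrict_iff' measurableSet_Ioc).2 (.of_forall fun x hx => ?_)
    have hx0 : 0 < x := hx.1
    dsimp only
    rw [norm_of_nonneg (by positivity), norm_of_nonneg (by positivity)]
    linarith [(hbound hx0).1]
  have hD0 : 0 ≤ ∫ r in 0..R, (r ^ (a - 1) / (ε + r ^ a) - r ^ (a * b - 1) / (ε + r ^ a) ^ b) := by
    rw [intervalIntegral.integral_of_le hR]
    exact setIntegral_nonneg measurableSet_Ioc fun x hx => (hbound hx.1).1
  have hD : ∫ r in 0..R, (r ^ (a - 1) / (ε + r ^ a) - r ^ (a * b - 1) / (ε + r ^ a) ^ b) ≤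
      (b - 1) / a := by
    set G : ℝ → ℝ := fun r => (b - 1) / a * (r ^ a / (ε + r ^ a))
    have hG : ContinuousOn G (Icc 0 R) :=
      (continuousOn_const.mul (continuousOn_rpow_div_const_add_rpow ha hε)).mono
        Icc_subset_Ici_self
    have hG' : ∀ x ∈ Ioo 0 R,
        HasDerivWithinAt G ((b - 1) * (ε * x ^ (a - 1) / (ε + x ^ a) ^ 2)) (Ioi x) x :=
      fun x hx => (((hasDerivAt_rpow_div_const_add_rpow hε hx.1).const_mul
        ((b - 1) / a)).congr_deriv (by field_simp)).hasDerivWithinAt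
    calc _ ≤ G R - G 0 :=
          intervalIntegral.integral_le_sub_of_hasDeriv_right_of_le hR hG hG'
            ((intervalIntegrable_iff_integrableOn_Icc_of_le hR).1 (hh.sub hf))
            fun x hx => (hbound hx.1).2
      _ ≤ (b - 1) / a := by
          simp only [G, zero_rpow ha.ne', zero_div, mul_zero, sub_zero]
          exact mul_le_of_le_one_right (div_nonneg (by linarith) ha.le)
            (div_le_one_of_le₀ (by linarith) (by positivity))
  rw [← integral_rpow_sub_one_div_const_add_rpow ha hε hR, abs_sub_comm,
    ← intervalIntegral.integral_sub hh hf, abs_of_nonneg hD0]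
  exact hD

end Asymptotics

/-- As `ε → 0⁺`,
`∫_{|y|≤R} |y|²/(ε+|y|^{2−s})^{8/(2−s)} dy = (ω₅/(2−s))|log ε| + O(1)`. -/
theorem log_asymptotics_dim6
    (s : ℝ) (hs0 : 0 ≤ s) (hs2 : s < 2) (R : ℝ) (hR : 0 < R) :
    ∃ C : ℝ, ∃ ε₀ : ℝ, 0 < ε₀ ∧ ∀ ε : ℝ, 0 < ε → ε < ε₀ →
      abs ((∫ y in {y : EuclideanSpace ℝ (Fin 6) | ‖y‖ ≤ R},
            ‖y‖ ^ 2 / (ε + ‖y‖ ^ (2 - s)) ^ (8 / (2 - s)))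
          - omega5 / (2 - s) * |Real.log ε|) ≤ C := by
  set a := 2 - s
  have ha : 0 < a := by linarith
  have hb : 2 ≤ 8 / a := by rw [le_div_iff₀ ha]; linarith
  have hω : 0 < omega5 := by unfold omega5; positivity
  refine ⟨omega5 * ((8 / a - 1 + max |log (R ^ a)| |log (R ^ a + 1)|) / a), 1, one_pos,
    fun ε hε hε1 => ?_⟩
  have hlog : |log (ε + R ^ a)| ≤ max |log (R ^ a)| |log (R ^ a + 1)| :=
    abs_le_max_abs_abs (log_le_log (by positivity) (by linarith))
      (log_le_log (by positivity) (by linarith))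
  have hmain := abs_integral_rpow_div_const_add_rpow_sub_log_le ha hb hε hR.le
  rw [integral_norm_sq_div_fin_six ha.ne' hR.le, abs_of_neg (log_neg hε hε1)]
  calc _ = omega5 * |(∫ r in 0..R, r ^ (a * (8 / a) - 1) / (ε + r ^ a) ^ (8 / a))
          - (log (ε + R ^ a) - log ε) / a + log (ε + R ^ a) / a| := by
        rw [← abs_of_pos hω, ← abs_mul, abs_of_pos hω]
        ring_nf
    _ ≤ omega5 * ((8 / a - 1) / a + max |log (R ^ a)| |log (R ^ a + 1)| / a) := by
        gcongr
        refine (abs_add_le _ _).trans (add_le_add hmain ?_)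
        rw [abs_div, abs_of_pos ha]
        gcongr
    _ = omega5 * ((8 / a - 1 + max |log (R ^ a)| |log (R ^ a + 1)|) / a) := by ring
end
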